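/- Let $d_1 < d_2 < \cdots < d_s < \tau_0$ be reals and $K_i = \prod_{j \neq i}(d_j - \tau_0)/(d_j - d_i)$. Then $|K_1| < |K_2|$. -/

import Mathlib

/-! $K_i$ is the Lagrange basis polynomial of the nodes $d$ at index $i$, evaluated at $\tau_0$.
Splitting off the factor $j = 2$ from $K_1$ and $j = 1$ from $K_2$ leaves products over the same
indices $j \geq 3$, and there each factor of $K_1$ is at most the matching one of $K_2$ in absolute
value because $d_j - d_1 > d_j - d_2 > 0$. The split-off factors have the common denominator
$|d_2 - d_1|$ and numerators $\tau_0 - d_2 < \tau_0 - d_1$, which makes the inequality strict. -/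

open Finset

lemma abs_div_sub_le_abs_div_sub {a b c : ℝ} (x : ℝ) (hab : a < b) (hbc : b < c) :
    |x / (c - a)| ≤ |x / (c - b)| := by
  rw [abs_div, abs_div, abs_of_pos (by linarith : 0 < c - a), abs_of_pos (sub_pos.2 hbc)]
  exact div_le_div_of_nonneg_left (abs_nonneg x) (sub_pos.2 hbc) (by linarith)

lemma abs_div_sub_lt_abs_div_sub {a b τ : ℝ} (hab : a < b) (hbτ : b < τ) :
    |(b - τ) / (b - a)| < |(a - τ) / (a - b)| := by
  rw [abs_div, abs_div, abs_sub_comm a b, abs_of_neg (sub_neg.2 hbτ),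
    abs_of_neg (by linarith : a - τ < 0)]
  exact div_lt_div_of_pos_right (by linarith) (abs_pos.2 (sub_ne_zero.2 hab.ne'))

theorem abs_prod_erase_lt_abs_prod_erase {ι : Type*} [Fintype ι] [DecidableEq ι]
    (d : ι → ℝ) (τ : ℝ) {i k : ι} (hik : d i < d k) (hkτ : d k < τ)
    (hgap : ∀ j, j ≠ i → j ≠ k → d k < d j) (hτ : ∀ j, d j ≠ τ) :
    |∏ j ∈ univ.erase i, (d j - τ) / (d j - d i)| <
      |∏ j ∈ univ.erase k, (d j - τ) / (d j - d k)| := by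
  have hne : i ≠ k := fun h => hik.ne (congrArg d h)
  set S := (univ.erase i).erase k
  have hS : ∀ j ∈ S, d k < d j := fun j hj =>
    hgap j (ne_of_mem_erase (mem_of_mem_erase hj)) (ne_of_mem_erase hj)
  rw [← mul_prod_erase _ _ (mem_erase.2 ⟨hne.symm, mem_univ k⟩),
    ← mul_prod_erase _ _ (mem_erase.2 ⟨hne, mem_univ i⟩),
    erase_right_comm (s := univ) (a := k),
    abs_mul, abs_mul, abs_prod, abs_prod]
  refine mul_lt_mul (abs_div_sub_lt_abs_div_sub hik hkτ) ?_ ?_ (abs_nonneg _)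
  · exact prod_le_prod (fun _ _ => abs_nonneg _)
      fun j hj => abs_div_sub_le_abs_div_sub _ hik (hS j hj)
  · refine prod_pos fun j hj => abs_pos.2 (div_ne_zero (sub_ne_zero.2 (hτ j)) ?_)
    exact sub_ne_zero.2 (hik.trans (hS j hj)).ne'

theorem stmt_4 (s : ℕ) (hs : 2 ≤ s) (d : Fin s → ℝ) (τ₀ : ℝ)
    (hmono : ∀ i j : Fin s, i < j → d i < d j)
    (hτ : ∀ i, d i < τ₀)
    (K : Fin s → ℝ)
    (hK : ∀ i, K i = ∏ j ∈ Finset.univ.erase i, (d j - τ₀) / (d j - d i)) :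
    |K ⟨0, by omega⟩| < |K ⟨1, by omega⟩| := by
  rw [hK, hK]
  refine abs_prod_erase_lt_abs_prod_erase d τ₀ (hmono _ _ (Fin.mk_lt_mk.2 zero_lt_one)) (hτ _) ?_
    fun j => (hτ j).ne
  intro j hj0 hj1
  refine hmono _ _ ?_
  simp only [ne_eq, Fin.ext_iff, Fin.lt_def] at hj0 hj1 ⊢
  omega
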